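/- arXiv:2310.08284 — 7 statements merged into one kernel-verified Lean document; each statement's English description precedes it below -/
import Mathlib

section
/- Let (Ω, P) be a probability space, N ≥ 2, u† : Fin N → ℝ with Σᵢ u†(i) = 0, and σ ≥ 0. Fix i ∈ Fin N, and for each j ≠ i let ε_{i,j} : Ω → ℝ be a square-integrable random variable with E[ε_{i,j}] = 0, Var[ε_{i,j}] = σ², and Cov[ε_{i,j}, ε_{i,k}] = 0 for all j ≠ k. Define ρ_{i,j}(ω) = u†(i) − u†(j) + ε_{i,j}(ω) and U(i)(ω) = (1/N)·Σ_{j ≠ i} ρ_{i,j}(ω). Then for every δ > 0, P({ω : |U(i)(ω) − u†(i)| ≥ δ}) ≤ (N−1)·σ²/(N²·δ²); in particular the deviation probability is bounded by σ²/(N·δ²), so the potential method is a consistent estimator of the utility as the number of securities N grows. -/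
open Finset MeasureTheory ProbabilityTheory

/-! Since `∑ u† = 0`, the deterministic parts `u†(i) - u†(j)` of the `ρ_{i,j}` add up to
`N u†(i)`, so `U(i) - u†(i) = (1/N) ∑_{j ≠ i} ε_{i,j}`. The noise terms are centered and
uncorrelated, so their sum has variance `(N - 1) σ²`, and Chebyshev's inequality applies. -/

section Uncorrelated

variable {Ω ι : Type*} [MeasurableSpace Ω] {μ : Measure Ω} {s : Finset ι} {X : ι → Ω → ℝ}

lemma variance_sum_of_covariance_eq_zero [IsFiniteMeasure μ]
    (hX : ∀ j ∈ s, MemLp (X j) 2 μ)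
    (hcov : ∀ j ∈ s, ∀ k ∈ s, j ≠ k → cov[X j, X k; μ] = 0) :
    Var[∑ j ∈ s, X j; μ] = ∑ j ∈ s, Var[X j; μ] := by
  rw [← covariance_self (memLp_finsetSum' s hX).aestronglyMeasurable.aemeasurable,
    covariance_sum_sum' hX hX]
  refine sum_congr rfl fun j hj => ?_
  rw [sum_eq_single_of_mem j hj fun k hk hkj => hcov j hj k hk hkj.symm,
    covariance_self (hX j hj).aestronglyMeasurable.aemeasurable]

lemma meas_le_abs_sum_le_of_covariance_eq_zero [IsProbabilityMeasure μ]
    (hX : ∀ j ∈ s, MemLp (X j) 2 μ) (hmean : ∀ j ∈ s, μ[X j] = 0) {σ : ℝ}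
    (hvar : ∀ j ∈ s, Var[X j; μ] = σ ^ 2)
    (hcov : ∀ j ∈ s, ∀ k ∈ s, j ≠ k → cov[X j, X k; μ] = 0) {c : ℝ} (hc : 0 < c) :
    μ {ω | c ≤ |∑ j ∈ s, X j ω|} ≤ ENNReal.ofReal (#s * σ ^ 2 / c ^ 2) := by
  have hmeanSum : μ[∑ j ∈ s, X j] = 0 := by
    simp only [Finset.sum_apply]
    rw [integral_finsetSum s fun j hj => (hX j hj).integrable one_le_two]
    exact sum_eq_zero hmean
  have hcheb := meas_ge_le_variance_div_sq (memLp_finsetSum' s hX) hc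
  rw [variance_sum_of_covariance_eq_zero hX hcov, sum_congr rfl hvar, sum_const,
    nsmul_eq_mul, hmeanSum] at hcheb
  simpa only [sub_zero, Finset.sum_apply] using hcheb

end Uncorrelated

lemma sum_sdiff_singleton_sub_eq {ι : Type*} [Fintype ι] [DecidableEq ι] (u : ι → ℝ) (i : ι) :
    ∑ j ∈ univ \ {i}, (u i - u j) = Fintype.card ι * u i - ∑ j, u j := by
  rw [sum_subset (subset_univ _) fun j _ hj => by simp_all, sum_sub_distrib, sum_const, card_univ,
    nsmul_eq_mul]

theorem potential_method_utility_consistency_general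
    {Ω : Type*} [MeasurableSpace Ω] (μ : Measure Ω) [IsProbabilityMeasure μ]
    (N : ℕ)
    (udag : Fin N → ℝ) (hu : ∑ k, udag k = 0)
    (σ : ℝ) (i : Fin N)
    (ε : Fin N → Ω → ℝ)
    (hL2 : ∀ j, j ≠ i → MemLp (ε j) 2 μ)
    (hmean : ∀ j, j ≠ i → ∫ ω, ε j ω ∂μ = 0)
    (hvar : ∀ j, j ≠ i → variance (ε j) μ = σ ^ 2)
    (hcov : ∀ j k, j ≠ i → k ≠ i → j ≠ k →
      (∫ ω, ε j ω * ε k ω ∂μ) - (∫ ω, ε j ω ∂μ) * (∫ ω, ε k ω ∂μ) = 0)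
    (ρ : Fin N → Ω → ℝ)
    (hρ : ∀ j, j ≠ i → ∀ ω, ρ j ω = udag i - udag j + ε j ω)
    (U : Ω → ℝ)
    (hU : ∀ ω, U ω = (1 / (N : ℝ)) * ∑ j ∈ univ \ {i}, ρ j ω) :
    ∀ δ : ℝ, 0 < δ →
      μ {ω | δ ≤ |U ω - udag i|} ≤
        ENNReal.ofReal (((N : ℝ) - 1) * σ ^ 2 / ((N : ℝ) ^ 2 * δ ^ 2)) ∧
      μ {ω | δ ≤ |U ω - udag i|} ≤
        ENNReal.ofReal (σ ^ 2 / ((N : ℝ) * δ ^ 2)) := by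
  intro δ hδ
  have hN : (0 : ℝ) < N := Nat.cast_pos.mpr i.pos
  have hs : ∀ j ∈ univ \ {i}, j ≠ i := by simp
  have hcard : (#(univ \ {i}) : ℝ) = N - 1 := by
    rw [card_univ_sdiff, card_singleton, Fintype.card_fin, Nat.cast_sub (Nat.one_le_of_lt i.pos),
      Nat.cast_one]
  have hdev : ∀ ω, U ω - udag i = (∑ j ∈ univ \ {i}, ε j ω) / N := fun ω => by
    rw [hU, sum_congr rfl fun j hj => hρ j (hs j hj) ω, sum_add_distrib,
      sum_sdiff_singleton_sub_eq, hu, Fintype.card_fin]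
    field_simp
    ring
  have hevent : {ω | δ ≤ |U ω - udag i|} = {ω | N * δ ≤ |∑ j ∈ univ \ {i}, ε j ω|} := by
    ext ω
    rw [Set.mem_ofPred_eq, Set.mem_ofPred_eq, hdev, abs_div, abs_of_pos hN, le_div_iff₀ hN,
      mul_comm]
  have hbound : μ {ω | δ ≤ |U ω - udag i|} ≤
      ENNReal.ofReal (((N : ℝ) - 1) * σ ^ 2 / ((N : ℝ) ^ 2 * δ ^ 2)) := by
    rw [hevent, ← hcard, ← mul_pow]
    refine meas_le_abs_sum_le_of_covariance_eq_zero (fun j hj => hL2 j (hs j hj))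
      (fun j hj => hmean j (hs j hj)) (fun j hj => hvar j (hs j hj)) (fun j hj k hk hjk => ?_)
      (mul_pos hN hδ)
    rw [covariance_eq_sub (hL2 j (hs j hj)) (hL2 k (hs k hk))]
    exact hcov j k (hs j hj) (hs k hk) hjk
  refine ⟨hbound, hbound.trans (ENNReal.ofReal_le_ofReal ?_)⟩
  calc ((N : ℝ) - 1) * σ ^ 2 / ((N : ℝ) ^ 2 * δ ^ 2)
      ≤ N * σ ^ 2 / ((N : ℝ) ^ 2 * δ ^ 2) := by gcongr; linarith
    _ = σ ^ 2 / ((N : ℝ) * δ ^ 2) := by field_simp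

/-- Chebyshev-type consistency bound for the potential-method utility estimator:
the deviation probability is bounded by `(N-1)σ²/(N²δ²)`, and in particular by
`σ²/(Nδ²)`. -/
theorem potential_method_utility_consistency
    {Ω : Type*} [MeasurableSpace Ω] (μ : Measure Ω) [IsProbabilityMeasure μ]
    (N : ℕ) (hN : 2 ≤ N)
    (udag : Fin N → ℝ) (hu : ∑ k, udag k = 0)
    (σ : ℝ) (hσ : 0 ≤ σ) (i : Fin N)
    (ε : Fin N → Ω → ℝ)
    (hL2 : ∀ j, j ≠ i → MemLp (ε j) 2 μ)
    (hmean : ∀ j, j ≠ i → ∫ ω, ε j ω ∂μ = 0)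
    (hvar : ∀ j, j ≠ i → variance (ε j) μ = σ ^ 2)
    (hcov : ∀ j k, j ≠ i → k ≠ i → j ≠ k →
      (∫ ω, ε j ω * ε k ω ∂μ) - (∫ ω, ε j ω ∂μ) * (∫ ω, ε k ω ∂μ) = 0)
    (ρ : Fin N → Ω → ℝ)
    (hρ : ∀ j, j ≠ i → ∀ ω, ρ j ω = udag i - udag j + ε j ω)
    (U : Ω → ℝ)
    (hU : ∀ ω, U ω = (1 / (N : ℝ)) * ∑ j ∈ univ \ {i}, ρ j ω) :
    ∀ δ : ℝ, 0 < δ →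
      μ {ω | δ ≤ |U ω - udag i|} ≤
        ENNReal.ofReal (((N : ℝ) - 1) * σ ^ 2 / ((N : ℝ) ^ 2 * δ ^ 2)) ∧
      μ {ω | δ ≤ |U ω - udag i|} ≤
        ENNReal.ofReal (σ ^ 2 / ((N : ℝ) * δ ^ 2)) :=
  potential_method_utility_consistency_general μ N udag hu σ i ε hL2 hmean hvar hcov ρ hρ U hU
end

section
/- Let (Ω, P) be a probability space, N ≥ 2, u† : Fin N → ℝ with Σᵢ u†(i) = 0, and for each ordered pair (a,b) with a ≠ b let ε_{a,b} : Ω → ℝ be an integrable random variable with E[ε_{a,b}] = 0. Define ρ_{a,b}(ω) = u†(a) − u†(b) + ε_{a,b}(ω) and U(a)(ω) = (1/N)·Σ_{b ≠ a} ρ_{a,b}(ω). Then for all i ≠ j, E[U(i) − U(j)] = u†(i) − u†(j); that is, the potential method is an unbiased estimator of the preference function ρ†(i,j) = u†(i) − u†(j). -/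
/-!
Writing `ρ a b = u a - u b + ε a b`, the deterministic part of `∑_{b ≠ a} ρ a b` is
`∑_b (u a - u b) = N u a - ∑_b u b = N u a`, because the `b = a` term vanishes and the
utilities are normalised. Hence `U a = u a + (1/N) ∑_{b ≠ a} ε a b`, whose expectation is
`u a`, and linearity gives the claim for `U i - U j`.
-/

open Finset MeasureTheory

theorem Finset.sum_sdiff_singleton_sub {ι M : Type*} [Fintype ι] [DecidableEq ι]
    [AddCommGroup M] (f : ι → M) (a : ι) :
    ∑ b ∈ univ \ {a}, (f a - f b) = Fintype.card ι • f a - ∑ b, f b := by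
  have hdrop : ∑ b ∈ univ \ {a}, (f a - f b) = ∑ b, (f a - f b) :=
    sum_subset (subset_univ _) fun b _ hb => by
      rw [mem_sdiff, not_and_not_right, mem_singleton] at hb
      simp [hb (mem_univ b)]
  rw [hdrop, sum_sub_distrib, sum_const, card_univ]

section Potential

variable {ι Ω : Type*} [Fintype ι] [DecidableEq ι] (u : ι → ℝ) (ε ρ : ι → ι → Ω → ℝ)
  (U : ι → Ω → ℝ)

theorem potential_eq_utility_add_noise (hu : ∑ i, u i = 0)
    (hρ : ∀ a b, a ≠ b → ∀ ω, ρ a b ω = u a - u b + ε a b ω)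
    (hU : ∀ a ω, U a ω = (1 / (Fintype.card ι : ℝ)) * ∑ b ∈ univ \ {a}, ρ a b ω) (a : ι) :
    U a = fun ω => u a + (1 / (Fintype.card ι : ℝ)) * ∑ b ∈ univ \ {a}, ε a b ω := by
  have hcard : (Fintype.card ι : ℝ) ≠ 0 :=
    Nat.cast_ne_zero.mpr (Fintype.card_pos_iff.mpr ⟨a⟩).ne'
  funext ω
  have hsplit : ∑ b ∈ univ \ {a}, ρ a b ω
      = ∑ b ∈ univ \ {a}, (u a - u b) + ∑ b ∈ univ \ {a}, ε a b ω := by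
    rw [← sum_add_distrib]
    refine sum_congr rfl fun b hb => hρ a b ?_ ω
    simpa [eq_comm] using hb
  rw [hU, hsplit, sum_sdiff_singleton_sub, hu, sub_zero, nsmul_eq_mul]
  field_simp

variable [MeasurableSpace Ω] {μ : Measure Ω}

theorem integrable_sum_noise (hint : ∀ a b, a ≠ b → Integrable (ε a b) μ) (a : ι) :
    Integrable (fun ω => ∑ b ∈ univ \ {a}, ε a b ω) μ :=
  integrable_finsetSum _ fun b hb => hint a b (by simpa [eq_comm] using hb)

theorem integral_sum_noise (hint : ∀ a b, a ≠ b → Integrable (ε a b) μ)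
    (hmean : ∀ a b, a ≠ b → ∫ ω, ε a b ω ∂μ = 0) (a : ι) :
    ∫ ω, ∑ b ∈ univ \ {a}, ε a b ω ∂μ = 0 := by
  rw [integral_finsetSum _ fun b hb => hint a b (by simpa [eq_comm] using hb)]
  exact sum_eq_zero fun b hb => hmean a b (by simpa [eq_comm] using hb)

variable [IsProbabilityMeasure μ]

theorem integrable_potential (hu : ∑ i, u i = 0)
    (hint : ∀ a b, a ≠ b → Integrable (ε a b) μ)
    (hρ : ∀ a b, a ≠ b → ∀ ω, ρ a b ω = u a - u b + ε a b ω)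
    (hU : ∀ a ω, U a ω = (1 / (Fintype.card ι : ℝ)) * ∑ b ∈ univ \ {a}, ρ a b ω) (a : ι) :
    Integrable (U a) μ := by
  rw [potential_eq_utility_add_noise u ε ρ U hu hρ hU a]
  exact (integrable_const _).add ((integrable_sum_noise ε hint a).const_mul _)

theorem integral_potential (hu : ∑ i, u i = 0)
    (hint : ∀ a b, a ≠ b → Integrable (ε a b) μ)
    (hmean : ∀ a b, a ≠ b → ∫ ω, ε a b ω ∂μ = 0)
    (hρ : ∀ a b, a ≠ b → ∀ ω, ρ a b ω = u a - u b + ε a b ω)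
    (hU : ∀ a ω, U a ω = (1 / (Fintype.card ι : ℝ)) * ∑ b ∈ univ \ {a}, ρ a b ω) (a : ι) :
    ∫ ω, U a ω ∂μ = u a := by
  rw [potential_eq_utility_add_noise u ε ρ U hu hρ hU a,
    integral_add (integrable_const _) ((integrable_sum_noise ε hint a).const_mul _),
    integral_const_mul, integral_sum_noise ε hint hmean a]
  simp

end Potential

theorem potential_method_unbiased_preference_general
    {Ω : Type*} [MeasurableSpace Ω] (μ : Measure Ω) [IsProbabilityMeasure μ]
    (N : ℕ)
    (udag : Fin N → ℝ) (hu : ∑ i, udag i = 0)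
    (ε : Fin N → Fin N → Ω → ℝ)
    (hint : ∀ a b, a ≠ b → Integrable (ε a b) μ)
    (hmean : ∀ a b, a ≠ b → ∫ ω, ε a b ω ∂μ = 0)
    (ρ : Fin N → Fin N → Ω → ℝ)
    (hρ : ∀ a b, a ≠ b → ∀ ω, ρ a b ω = udag a - udag b + ε a b ω)
    (U : Fin N → Ω → ℝ)
    (hU : ∀ a ω, U a ω = (1 / (N : ℝ)) * ∑ b ∈ univ \ {a}, ρ a b ω) :
    ∀ i j : Fin N, i ≠ j →
      ∫ ω, (U i ω - U j ω) ∂μ = udag i - udag j := by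
  replace hU : ∀ a ω, U a ω = (1 / (Fintype.card (Fin N) : ℝ)) * ∑ b ∈ univ \ {a}, ρ a b ω := by
    simpa only [Fintype.card_fin] using hU
  intro i j _
  rw [integral_sub (integrable_potential udag ε ρ U hu hint hρ hU i)
      (integrable_potential udag ε ρ U hu hint hρ hU j),
    integral_potential udag ε ρ U hu hint hmean hρ hU,
    integral_potential udag ε ρ U hu hint hmean hρ hU]

/-- The potential method is an unbiased estimator of the preference function
`ρ†(i,j) = u†(i) - u†(j)`. -/
theorem potential_method_unbiased_preference
    {Ω : Type*} [MeasurableSpace Ω] (μ : Measure Ω) [IsProbabilityMeasure μ]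
    (N : ℕ) (hN : 2 ≤ N)
    (udag : Fin N → ℝ) (hu : ∑ i, udag i = 0)
    (ε : Fin N → Fin N → Ω → ℝ)
    (hint : ∀ a b, a ≠ b → Integrable (ε a b) μ)
    (hmean : ∀ a b, a ≠ b → ∫ ω, ε a b ω ∂μ = 0)
    (ρ : Fin N → Fin N → Ω → ℝ)
    (hρ : ∀ a b, a ≠ b → ∀ ω, ρ a b ω = udag a - udag b + ε a b ω)
    (U : Fin N → Ω → ℝ)
    (hU : ∀ a ω, U a ω = (1 / (N : ℝ)) * ∑ b ∈ univ \ {a}, ρ a b ω) :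
    ∀ i j : Fin N, i ≠ j →
      ∫ ω, (U i ω - U j ω) ∂μ = udag i - udag j :=
  potential_method_unbiased_preference_general μ N udag hu ε hint hmean ρ hρ U hU
end

section
/- Let (Ω, P) be a probability space, N ≥ 2, u† : Fin N → ℝ with Σᵢ u†(i) = 0, and σ ≥ 0. For each ordered pair (a,b) with a ≠ b let ε_{a,b} : Ω → ℝ be a square-integrable random variable with E[ε_{a,b}] = 0 and Var[ε_{a,b}] = σ², and assume that for any two distinct ordered pairs (a,b) ≠ (c,d) (with a ≠ b, c ≠ d) the covariance Cov[ε_{a,b}, ε_{c,d}] = 0. Define ρ_{a,b}(ω) = u†(a) − u†(b) + ε_{a,b}(ω) and U(a)(ω) = (1/N)·Σ_{b ≠ a} ρ_{a,b}(ω). Then for all i ≠ j, Var[U(i) − U(j)] = 2·(N−1)·σ²/N². -/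
open Finset MeasureTheory ProbabilityTheory

/-!
Up to an additive constant, `N • (U i - U j)` is the difference of the noise sums of rows `i`
and `j`. Each row sum has `N - 1` uncorrelated terms of variance `σ²`, and the two rows involve
disjoint sets of ordered pairs, so they are uncorrelated and their variances add up to
`2 (N - 1) σ²`.
-/

namespace ProbabilityTheory

variable {Ω : Type*} {mΩ : MeasurableSpace Ω} {μ : Measure Ω}

lemma variance_fun_sum_of_covariance_eq_zero [IsFiniteMeasure μ] {ι : Type*} {s : Finset ι}
    {X : ι → Ω → ℝ} (hX : ∀ i ∈ s, MemLp (X i) 2 μ)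
    (hcov : ∀ i ∈ s, ∀ j ∈ s, i ≠ j → cov[X i, X j; μ] = 0) :
    Var[fun ω ↦ ∑ i ∈ s, X i ω; μ] = ∑ i ∈ s, Var[X i; μ] := by
  rw [variance_fun_sum' hX]
  refine sum_congr rfl fun i hi ↦ ?_
  rw [sum_eq_single_of_mem i hi fun j hj hji ↦ hcov i hi j hj hji.symm,
    covariance_self (hX i hi).aemeasurable]

end ProbabilityTheory

section RowNoise

variable {Ω : Type*} {mΩ : MeasurableSpace Ω} {μ : Measure Ω}
  {α : Type*} [Fintype α] [DecidableEq α] {ε : α → α → Ω → ℝ}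

def rowNoise (ε : α → α → Ω → ℝ) (a : α) : Ω → ℝ :=
  fun ω ↦ ∑ b ∈ univ \ {a}, ε a b ω

lemma ne_of_mem_univ_sdiff_singleton {a b : α} (hb : b ∈ univ \ {a}) : a ≠ b := by
  simpa [eq_comm] using hb

lemma memLp_rowNoise (hL2 : ∀ a b, a ≠ b → MemLp (ε a b) 2 μ) (a : α) :
    MemLp (rowNoise ε a) 2 μ :=
  memLp_finsetSum _ fun _ hb ↦ hL2 _ _ (ne_of_mem_univ_sdiff_singleton hb)

lemma variance_rowNoise [IsFiniteMeasure μ] (hL2 : ∀ a b, a ≠ b → MemLp (ε a b) 2 μ) {σ : ℝ}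
    (hvar : ∀ a b, a ≠ b → Var[ε a b; μ] = σ ^ 2)
    (hcov : ∀ a b c d, a ≠ b → c ≠ d → (a, b) ≠ (c, d) → cov[ε a b, ε c d; μ] = 0) (a : α) :
    Var[rowNoise ε a; μ] = (Fintype.card α - 1) * σ ^ 2 := by
  have hcard : (#(univ \ {a}) : ℝ) = Fintype.card α - 1 := by
    rw [card_univ_sdiff, card_singleton, Nat.cast_sub (Fintype.card_pos_iff.2 ⟨a⟩),
      Nat.cast_one]
  unfold rowNoise
  rw [variance_fun_sum_of_covariance_eq_zero
      (fun b hb ↦ hL2 a b (ne_of_mem_univ_sdiff_singleton hb))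
      (fun b hb b' hb' hbb' ↦ hcov _ _ _ _ (ne_of_mem_univ_sdiff_singleton hb)
        (ne_of_mem_univ_sdiff_singleton hb') (by simp [hbb'])),
    sum_congr rfl fun b hb ↦ hvar a b (ne_of_mem_univ_sdiff_singleton hb),
    sum_const, nsmul_eq_mul, hcard]

lemma covariance_rowNoise_eq_zero [IsFiniteMeasure μ] (hL2 : ∀ a b, a ≠ b → MemLp (ε a b) 2 μ)
    (hcov : ∀ a b c d, a ≠ b → c ≠ d → (a, b) ≠ (c, d) → cov[ε a b, ε c d; μ] = 0)
    {a a' : α} (haa' : a ≠ a') :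
    cov[rowNoise ε a, rowNoise ε a'; μ] = 0 := by
  unfold rowNoise
  rw [covariance_fun_sum_fun_sum' (fun b hb ↦ hL2 a b (ne_of_mem_univ_sdiff_singleton hb))
      (fun b hb ↦ hL2 a' b (ne_of_mem_univ_sdiff_singleton hb))]
  exact sum_eq_zero fun b hb ↦ sum_eq_zero fun b' hb' ↦
    hcov _ _ _ _ (ne_of_mem_univ_sdiff_singleton hb) (ne_of_mem_univ_sdiff_singleton hb')
      (by simp [haa'])

lemma variance_rowNoise_sub_rowNoise [IsFiniteMeasure μ]
    (hL2 : ∀ a b, a ≠ b → MemLp (ε a b) 2 μ) {σ : ℝ}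
    (hvar : ∀ a b, a ≠ b → Var[ε a b; μ] = σ ^ 2)
    (hcov : ∀ a b c d, a ≠ b → c ≠ d → (a, b) ≠ (c, d) → cov[ε a b, ε c d; μ] = 0)
    {a a' : α} (haa' : a ≠ a') :
    Var[rowNoise ε a - rowNoise ε a'; μ] = 2 * (Fintype.card α - 1) * σ ^ 2 := by
  rw [variance_sub (memLp_rowNoise hL2 a) (memLp_rowNoise hL2 a'),
    variance_rowNoise hL2 hvar hcov, variance_rowNoise hL2 hvar hcov,
    covariance_rowNoise_eq_zero hL2 hcov haa']
  ring

lemma sum_eq_sum_sub_add_rowNoise {ρ : α → α → Ω → ℝ} (u : α → ℝ)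
    (hρ : ∀ a b, a ≠ b → ∀ ω, ρ a b ω = u a - u b + ε a b ω) (a : α) (ω : Ω) :
    ∑ b ∈ univ \ {a}, ρ a b ω = ∑ b ∈ univ \ {a}, (u a - u b) + rowNoise ε a ω := by
  rw [rowNoise, ← sum_add_distrib]
  exact sum_congr rfl fun b hb ↦ hρ a b (ne_of_mem_univ_sdiff_singleton hb) ω

end RowNoise

theorem potential_method_preference_variance_general
    {Ω : Type*} [MeasurableSpace Ω] (μ : Measure Ω) [IsProbabilityMeasure μ]
    (N : ℕ)
    (udag : Fin N → ℝ)
    (σ : ℝ)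
    (ε : Fin N → Fin N → Ω → ℝ)
    (hL2 : ∀ a b, a ≠ b → MemLp (ε a b) 2 μ)
    (hvar : ∀ a b, a ≠ b → variance (ε a b) μ = σ ^ 2)
    (hcov : ∀ a b c d, a ≠ b → c ≠ d → (a, b) ≠ (c, d) →
      (∫ ω, ε a b ω * ε c d ω ∂μ) -
        (∫ ω, ε a b ω ∂μ) * (∫ ω, ε c d ω ∂μ) = 0)
    (ρ : Fin N → Fin N → Ω → ℝ)
    (hρ : ∀ a b, a ≠ b → ∀ ω, ρ a b ω = udag a - udag b + ε a b ω)
    (U : Fin N → Ω → ℝ)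
    (hU : ∀ a ω, U a ω = (1 / (N : ℝ)) * ∑ b ∈ univ \ {a}, ρ a b ω) :
    ∀ i j : Fin N, i ≠ j →
      variance (fun ω => U i ω - U j ω) μ =
        2 * ((N : ℝ) - 1) * σ ^ 2 / (N : ℝ) ^ 2 := by
  intro i j hij
  have hcov' : ∀ a b c d, a ≠ b → c ≠ d → (a, b) ≠ (c, d) → cov[ε a b, ε c d; μ] = 0 :=
    fun a b c d hab hcd hne ↦ by
      rw [covariance_eq_sub (hL2 a b hab) (hL2 c d hcd)]
      exact hcov a b c d hab hcd hne
  set c : Fin N → ℝ := fun a ↦ (1 / (N : ℝ)) * ∑ b ∈ univ \ {a}, (udag a - udag b)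
  have hdiff : (fun ω ↦ U i ω - U j ω) =
      fun ω ↦ (c i - c j) + 1 / (N : ℝ) * (rowNoise ε i - rowNoise ε j) ω := by
    ext ω
    simp only [hU, sum_eq_sum_sub_add_rowNoise udag hρ, c, Pi.sub_apply]
    ring
  have hmeas := ((memLp_rowNoise hL2 i).sub (memLp_rowNoise hL2 j)).aestronglyMeasurable
  rw [hdiff, variance_const_add (hmeas.const_mul _), variance_const_mul,
    variance_rowNoise_sub_rowNoise hL2 hvar hcov' hij, Fintype.card_fin]
  ring

/-- With noise terms of equal variance `σ²`, uncorrelated across distinct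
ordered pairs, the variance of the potential-method preference estimator is
`2(N-1)σ²/N²`. -/
theorem potential_method_preference_variance
    {Ω : Type*} [MeasurableSpace Ω] (μ : Measure Ω) [IsProbabilityMeasure μ]
    (N : ℕ) (hN : 2 ≤ N)
    (udag : Fin N → ℝ) (hu : ∑ k, udag k = 0)
    (σ : ℝ) (hσ : 0 ≤ σ)
    (ε : Fin N → Fin N → Ω → ℝ)
    (hL2 : ∀ a b, a ≠ b → MemLp (ε a b) 2 μ)
    (hmean : ∀ a b, a ≠ b → ∫ ω, ε a b ω ∂μ = 0)
    (hvar : ∀ a b, a ≠ b → variance (ε a b) μ = σ ^ 2)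
    (hcov : ∀ a b c d, a ≠ b → c ≠ d → (a, b) ≠ (c, d) →
      (∫ ω, ε a b ω * ε c d ω ∂μ) -
        (∫ ω, ε a b ω ∂μ) * (∫ ω, ε c d ω ∂μ) = 0)
    (ρ : Fin N → Fin N → Ω → ℝ)
    (hρ : ∀ a b, a ≠ b → ∀ ω, ρ a b ω = udag a - udag b + ε a b ω)
    (U : Fin N → Ω → ℝ)
    (hU : ∀ a ω, U a ω = (1 / (N : ℝ)) * ∑ b ∈ univ \ {a}, ρ a b ω) :
    ∀ i j : Fin N, i ≠ j →
      variance (fun ω => U i ω - U j ω) μ =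
        2 * ((N : ℝ) - 1) * σ ^ 2 / (N : ℝ) ^ 2 :=
  potential_method_preference_variance_general μ N udag σ ε hL2 hvar hcov ρ hρ U hU
end

section
/- Let N ≥ 1, let P = {(i,j) ∈ Fin N × Fin N : i < j}, and let B be the P × (Fin N) real matrix with B_{(i,j),k} = 1 if k = i, −1 if k = j, and 0 otherwise. For any vector ρ : P → ℝ define u* = (1/N)·(Bᵀ ·ᵥ ρ). Then u* satisfies the normal equations (Bᵀ·B) ·ᵥ u* = Bᵀ ·ᵥ ρ, and moreover Σ_{k} u*(k) = 0. -/
open Matrix Finset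

/-- The potential-method solution `u* = (1/N)·Bᵀρ` satisfies the normal
equations `(BᵀB)u* = Bᵀρ` and the zero-sum constraint `Σ u*(k) = 0`. -/
theorem potential_method_solution_normal_equations
    (N : ℕ) (hN : 1 ≤ N)
    (B : Matrix {p : Fin N × Fin N // p.1 < p.2} (Fin N) ℝ)
    (hB : ∀ p k, B p k =
      if k = p.1.1 then 1 else if k = p.1.2 then -1 else 0)
    (ρ : {p : Fin N × Fin N // p.1 < p.2} → ℝ)
    (uStar : Fin N → ℝ)
    (huStar : uStar = (1 / (N : ℝ)) • (Bᵀ *ᵥ ρ)) :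
    (Bᵀ * B) *ᵥ uStar = Bᵀ *ᵥ ρ ∧ ∑ k, uStar k = 0 := by
  have hN0 : (N : ℝ) ≠ 0 := by positivity
  set v : Fin N → ℝ := Bᵀ *ᵥ ρ with hv
  -- each row of B sums to 0
  have hrow : ∀ p : {p : Fin N × Fin N // p.1 < p.2}, ∑ k, B p k = 0 := by
    intro p
    have hne : p.1.1 ≠ p.1.2 := ne_of_lt p.2
    calc ∑ k, B p k
        = ∑ k, ((if k = p.1.1 then (1:ℝ) else 0) + (if k = p.1.2 then -1 else 0)) := by
          refine Finset.sum_congr rfl fun k _ => ?_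
          rw [hB]
          by_cases h1 : k = p.1.1 <;> by_cases h2 : k = p.1.2 <;> simp_all
      _ = 0 := by
          rw [Finset.sum_add_distrib]
          simp
  have hsumv : ∑ k, v k = 0 := by
    have : ∑ k, v k = ∑ p : {p : Fin N × Fin N // p.1 < p.2}, (∑ k, B p k) * ρ p := by
      simp only [hv, mulVec, dotProduct, transpose_apply]
      rw [Finset.sum_comm]
      simp [Finset.sum_mul]
    rw [this]
    simp [hrow]
  have hsumu : ∑ k, uStar k = 0 := by
    rw [huStar]
    simp only [Pi.smul_apply, smul_eq_mul, ← Finset.mul_sum]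
    rw [hsumv, mul_zero]
  refine ⟨?_, hsumu⟩
  -- key computation: (BᵀB u) k = N * u k - ∑ u j
  have key : ∀ k, ((Bᵀ * B) *ᵥ uStar) k = N * uStar k - ∑ j, uStar j := by
    intro k
    rw [← Matrix.mulVec_mulVec]
    have hBu : ∀ p : {p : Fin N × Fin N // p.1 < p.2},
        ∑ j, B p j * uStar j = uStar p.1.1 - uStar p.1.2 := by
      intro p
      have hne : p.1.1 ≠ p.1.2 := ne_of_lt p.2
      calc ∑ j, B p j * uStar j
          = ∑ j, ((if j = p.1.1 then uStar j else 0) + (if j = p.1.2 then -uStar j else 0)) := by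
            refine Finset.sum_congr rfl fun j _ => ?_
            rw [hB]
            by_cases h1 : j = p.1.1 <;> by_cases h2 : j = p.1.2 <;> simp_all
        _ = uStar p.1.1 - uStar p.1.2 := by
            rw [Finset.sum_add_distrib, Finset.sum_ite_eq', Finset.sum_ite_eq']
            simp [sub_eq_add_neg]
    have step1 : (Bᵀ *ᵥ (B *ᵥ uStar)) k
        = ∑ p : {p : Fin N × Fin N // p.1 < p.2},
            (if k = p.1.1 then (1:ℝ) else if k = p.1.2 then -1 else 0)
              * (uStar p.1.1 - uStar p.1.2) := by
      simp only [mulVec, dotProduct, transpose_apply]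
      refine Finset.sum_congr rfl fun p _ => ?_
      rw [hB, hBu]
    rw [step1]
    have step2 : ∑ p : {p : Fin N × Fin N // p.1 < p.2},
            (if k = p.1.1 then (1:ℝ) else if k = p.1.2 then -1 else 0)
              * (uStar p.1.1 - uStar p.1.2)
        = ∑ q ∈ Finset.univ.filter (fun q : Fin N × Fin N => q.1 < q.2),
            (if k = q.1 then (1:ℝ) else if k = q.2 then -1 else 0)
              * (uStar q.1 - uStar q.2) := by
      exact (Finset.sum_subtype (Finset.univ.filter fun q : Fin N × Fin N => q.1 < q.2)
        (fun q => by simp) (fun q => (if k = q.1 then (1:ℝ) else if k = q.2 then -1 else 0)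
              * (uStar q.1 - uStar q.2))).symm
    rw [step2, Finset.sum_filter, Fintype.sum_prod_type]
    have step3 : ∀ a b : Fin N,
        (if a < b then (if k = a then (1:ℝ) else if k = b then -1 else 0)
            * (uStar a - uStar b) else 0)
        = (if a = k ∧ k < b then uStar k - uStar b else 0)
          + (if b = k ∧ a < k then uStar k - uStar a else 0) := by
      intro a b
      by_cases hab : a < b
      · by_cases h1 : k = a
        · subst h1
          have hbk : ¬(b = k ∧ k < k) := fun ⟨_, h⟩ => lt_irrefl _ h
          simp [hab, hbk]
        · by_cases h2 : k = b
          · subst h2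
            have hak : ¬(a = k ∧ k < k) := fun ⟨h, _⟩ => h1 h.symm
            have hak' : ¬(a = k) := fun h => h1 h.symm
            simp [hab, h1, hak']
          · have hA : ¬(a = k) := fun h => h1 h.symm
            have hBk : ¬(b = k) := fun h => h2 h.symm
            simp [hab, h1, h2, hA, hBk]
      · have hA : ¬(a = k ∧ k < b) := fun ⟨ha, hb⟩ => hab (ha ▸ hb)
        have hBk : ¬(b = k ∧ a < k) := fun ⟨hb, ha⟩ => hab (hb ▸ ha)
        simp [hab, hA, hBk]
    calc ∑ a, ∑ b, (if a < b then (if k = a then (1:ℝ) else if k = b then -1 else 0)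
            * (uStar a - uStar b) else 0)
        = ∑ a, ∑ b, ((if a = k ∧ k < b then uStar k - uStar b else 0)
            + (if b = k ∧ a < k then uStar k - uStar a else 0)) := by
          exact Finset.sum_congr rfl fun a _ => Finset.sum_congr rfl fun b _ => step3 a b
      _ = (∑ b, if k < b then uStar k - uStar b else 0)
            + (∑ a, if a < k then uStar k - uStar a else 0) := by
          simp only [Finset.sum_add_distrib]
          congr 1
          · simp only [ite_and]
            rw [Finset.sum_comm]
            refine Finset.sum_congr rfl fun b _ => ?_
            rw [Finset.sum_ite_eq' Finset.univ k
              (fun _ => if k < b then uStar k - uStar b else 0)]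
            simp
          · refine Finset.sum_congr rfl fun a _ => ?_
            simp only [ite_and]
            rw [Finset.sum_ite_eq' Finset.univ k
              (fun _ => if a < k then uStar k - uStar a else 0)]
            simp
      _ = ∑ j, (uStar k - uStar j) := by
          rw [← Finset.sum_add_distrib]
          refine Finset.sum_congr rfl fun j _ => ?_
          rcases lt_trichotomy k j with h | h | h
          · simp [h, not_lt.mpr (le_of_lt h)]
          · simp [h, lt_irrefl]
          · simp [h, not_lt.mpr (le_of_lt h)]
      _ = N * uStar k - ∑ j, uStar j := by
          rw [Finset.sum_sub_distrib, Finset.sum_const, Finset.card_univ, Fintype.card_fin,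
            nsmul_eq_mul]
  ext k
  rw [key k, hsumu, sub_zero, huStar]
  simp only [Pi.smul_apply, smul_eq_mul]
  field_simp
end

section
/- Let N ≥ 1, let P = {(i,j) ∈ Fin N × Fin N : i < j}, and let B be the P × (Fin N) real matrix with B_{(i,j),k} = 1 if k = i, −1 if k = j, and 0 otherwise. For any ρ : P → ℝ define u* = (1/N)·(Bᵀ ·ᵥ ρ). Then for every vector u : Fin N → ℝ, Σ_{p ∈ P} ((B ·ᵥ u*)(p) − ρ(p))² ≤ Σ_{p ∈ P} ((B ·ᵥ u)(p) − ρ(p))²; that is, u* minimizes the least-squares objective ‖Bu − ρ‖² over all utility vectors. -/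
/-!
The potential solution `u*` satisfies the normal equations `Bᵀ B u* = Bᵀ ρ`: the matrix `Bᵀ B`
is `N • 1 - J`, the Laplacian of the complete graph, and `J Bᵀ = 0` because every row of `B`
sums to zero. The residual `B u* - ρ` is then orthogonal to the range of `B`, so Pythagoras gives
`‖B u - ρ‖² = ‖B u* - ρ‖² + ‖B (u - u*)‖²`.
-/

open Matrix Finset

theorem sum_mulVec_sub_sq_le_of_transpose_mulVec_eq_zero {m n R : Type*} [Fintype m] [Fintype n]
    [CommRing R] [LinearOrder R] [IsStrictOrderedRing R]
    (A : Matrix m n R) (b : m → R) {x : n → R} (hx : Aᵀ *ᵥ (A *ᵥ x - b) = 0) (y : n → R) :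
    ∑ i, ((A *ᵥ x) i - b i) ^ 2 ≤ ∑ i, ((A *ᵥ y) i - b i) ^ 2 := by
  set r := A *ᵥ x - b
  set d := A *ᵥ (y - x)
  have horth : ∑ i, r i * d i = 0 := by
    change r ⬝ᵥ (A *ᵥ (y - x)) = 0
    rw [dotProduct_mulVec, ← mulVec_transpose, hx, zero_dotProduct]
  have hsplit : ∀ i, (A *ᵥ y) i - b i = r i + d i := by
    intro i
    simp only [r, d, mulVec_sub, Pi.sub_apply]
    ring
  have hexpand : ∑ i, ((A *ᵥ y) i - b i) ^ 2 =
      ∑ i, r i ^ 2 + 2 * ∑ i, r i * d i + ∑ i, d i ^ 2 := by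
    simp only [hsplit, add_sq, sum_add_distrib, mul_sum, mul_assoc]
  rw [hexpand, horth, mul_zero, add_zero]
  exact le_add_of_nonneg_right (sum_nonneg fun i _ => sq_nonneg (d i))

theorem sum_pairs_lt_add_swap_add_sum_diag {ι M : Type*} [LinearOrder ι] [Fintype ι]
    [AddCommMonoid M] (f : ι → ι → M) :
    ∑ p : {p : ι × ι // p.1 < p.2}, (f p.1.1 p.1.2 + f p.1.2 p.1.1) + ∑ i, f i i =
      ∑ i, ∑ j, f i j := by
  rw [← subtype_univ, sum_subtype_eq_sum_filter (fun p : ι × ι => f p.1 p.2 + f p.2 p.1),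
    sum_filter, Fintype.sum_prod_type]
  simp only [ite_add_zero, sum_add_distrib]
  rw [sum_comm (f := fun i j => if i < j then f j i else 0), ← sum_add_distrib,
    ← sum_add_distrib]
  refine sum_congr rfl fun i _ => ?_
  rw [← Fintype.sum_ite_eq i (f i), ← sum_add_distrib, ← sum_add_distrib]
  refine sum_congr rfl fun j _ => ?_
  rcases lt_trichotomy i j with h | rfl | h
  · simp [h, h.not_gt, h.ne]
  · simp
  · simp [h, h.not_gt, h.ne']

def pairIncidence (ι R : Type*) [LinearOrder ι] [Ring R] : Matrix {p : ι × ι // p.1 < p.2} ι R :=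
  Matrix.of fun p k => if k = p.1.1 then 1 else if k = p.1.2 then -1 else 0

section pairIncidence

variable {ι R : Type*} [LinearOrder ι] [Fintype ι]

theorem pairIncidence_mulVec_apply [Ring R] (v : ι → R) (p : {p : ι × ι // p.1 < p.2}) :
    (pairIncidence ι R *ᵥ v) p = v p.1.1 - v p.1.2 := by
  simp [pairIncidence, mulVec, dotProduct, ite_mul, sum_ite, filter_ne', filter_eq', p.2.ne',
    sub_eq_add_neg]

theorem pairIncidence_mulVec_one [Ring R] : pairIncidence ι R *ᵥ 1 = 0 := by
  ext p
  simp [pairIncidence_mulVec_apply]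

theorem sum_pairIncidence_transpose_mulVec [CommRing R] (w : {p : ι × ι // p.1 < p.2} → R) :
    ∑ k, ((pairIncidence ι R)ᵀ *ᵥ w) k = 0 := by
  rw [← one_dotProduct, dotProduct_mulVec, vecMul_transpose, pairIncidence_mulVec_one,
    zero_dotProduct]

theorem pairIncidence_transpose_mulVec_mulVec_apply [CommRing R] (v : ι → R) (k : ι) :
    ((pairIncidence ι R)ᵀ *ᵥ (pairIncidence ι R *ᵥ v)) k = Fintype.card ι * v k - ∑ j, v j := by
  -- `f i j` is the contribution of the ordered pair `(i, j)` to row `k`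
  set f : ι → ι → R := fun i j => if i = k then v k - v j else 0
  have hterm : ∀ p : {p : ι × ι // p.1 < p.2},
      pairIncidence ι R p k * (v p.1.1 - v p.1.2) = f p.1.1 p.1.2 + f p.1.2 p.1.1 := by
    intro p
    have hne : p.1.1 ≠ p.1.2 := p.2.ne
    by_cases h1 : k = p.1.1
    · subst h1; simp [pairIncidence, f, hne.symm]
    by_cases h2 : k = p.1.2
    · subst h2; simp [pairIncidence, f, hne.symm]
    · simp [pairIncidence, f, h1, h2, Ne.symm h1, Ne.symm h2]
  calc ((pairIncidence ι R)ᵀ *ᵥ (pairIncidence ι R *ᵥ v)) k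
      = ∑ p : {p : ι × ι // p.1 < p.2}, (f p.1.1 p.1.2 + f p.1.2 p.1.1) := by
        refine sum_congr rfl fun p _ => ?_
        show pairIncidence ι R p k * _ = _
        rw [pairIncidence_mulVec_apply, hterm]
    _ = ∑ i, ∑ j, f i j - ∑ i, f i i := eq_sub_of_add_eq (sum_pairs_lt_add_swap_add_sum_diag f)
    _ = Fintype.card ι * v k - ∑ j, v j := by simp [f, sum_sub_distrib]

theorem pairIncidence_normal_eq [Field R] [CharZero R] (ρ : {p : ι × ι // p.1 < p.2} → R) :
    (pairIncidence ι R)ᵀ *ᵥ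
      (pairIncidence ι R *ᵥ ((Fintype.card ι : R)⁻¹ • ((pairIncidence ι R)ᵀ *ᵥ ρ)) - ρ) = 0 := by
  ext k
  have hcard : (Fintype.card ι : R) ≠ 0 := by
    have : Nonempty ι := ⟨k⟩
    exact Nat.cast_ne_zero.2 Fintype.card_ne_zero
  rw [mulVec_sub, Pi.sub_apply, pairIncidence_transpose_mulVec_mulVec_apply]
  simp only [Pi.smul_apply, smul_eq_mul, ← mul_sum, sum_pairIncidence_transpose_mulVec]
  field_simp
  simp

end pairIncidence

theorem potential_method_solution_minimizes_general
    (N : ℕ)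
    (B : Matrix {p : Fin N × Fin N // p.1 < p.2} (Fin N) ℝ)
    (hB : ∀ p k, B p k =
      if k = p.1.1 then 1 else if k = p.1.2 then -1 else 0)
    (ρ : {p : Fin N × Fin N // p.1 < p.2} → ℝ)
    (uStar : Fin N → ℝ)
    (huStar : uStar = (1 / (N : ℝ)) • (Bᵀ *ᵥ ρ)) :
    ∀ u : Fin N → ℝ,
      ∑ p, ((B *ᵥ uStar) p - ρ p) ^ 2 ≤ ∑ p, ((B *ᵥ u) p - ρ p) ^ 2 := by
  obtain rfl : B = pairIncidence (Fin N) ℝ := Matrix.ext hB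
  subst huStar
  apply sum_mulVec_sub_sq_le_of_transpose_mulVec_eq_zero
  simpa [one_div] using pairIncidence_normal_eq (ι := Fin N) ρ

/-- The potential-method solution `u* = (1/N)·Bᵀρ` minimizes the least-squares
objective `‖Bu - ρ‖²` over all utility vectors. -/
theorem potential_method_solution_minimizes
    (N : ℕ) (hN : 1 ≤ N)
    (B : Matrix {p : Fin N × Fin N // p.1 < p.2} (Fin N) ℝ)
    (hB : ∀ p k, B p k =
      if k = p.1.1 then 1 else if k = p.1.2 then -1 else 0)
    (ρ : {p : Fin N × Fin N // p.1 < p.2} → ℝ)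
    (uStar : Fin N → ℝ)
    (huStar : uStar = (1 / (N : ℝ)) • (Bᵀ *ᵥ ρ)) :
    ∀ u : Fin N → ℝ,
      ∑ p, ((B *ᵥ uStar) p - ρ p) ^ 2 ≤ ∑ p, ((B *ᵥ u) p - ρ p) ^ 2 :=
  potential_method_solution_minimizes_general N B hB ρ uStar huStar
end

section
/- Let N ≥ 1, let P = {(i,j) ∈ Fin N × Fin N : i < j}, and let B be the P × (Fin N) real matrix with B_{(i,j),k} = 1 if k = i, −1 if k = j, and 0 otherwise. Let ρ : P → ℝ. If a vector u : Fin N → ℝ satisfies the normal equations (Bᵀ·B) ·ᵥ u = Bᵀ ·ᵥ ρ together with the constraint Σ_k u(k) = 0, then u = (1/N)·(Bᵀ ·ᵥ ρ); i.e. the zero-sum solution of the normal equations is unique and equals the potential-method estimate. -/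
open Matrix Finset

/-- The zero-sum solution of the normal equations is unique and equals the
potential-method estimate `(1/N)·Bᵀρ`. -/
theorem potential_method_solution_unique_normal
    (N : ℕ) (hN : 1 ≤ N)
    (B : Matrix {p : Fin N × Fin N // p.1 < p.2} (Fin N) ℝ)
    (hB : ∀ p k, B p k =
      if k = p.1.1 then 1 else if k = p.1.2 then -1 else 0)
    (ρ : {p : Fin N × Fin N // p.1 < p.2} → ℝ)
    (u : Fin N → ℝ)
    (hnormal : (Bᵀ * B) *ᵥ u = Bᵀ *ᵥ ρ)
    (hsum : ∑ k, u k = 0) :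
    u = (1 / (N : ℝ)) • (Bᵀ *ᵥ ρ) := by
  have hN0 : (N : ℝ) ≠ 0 := by positivity
  -- inner product: (B *ᵥ u) p = u p.1.1 - u p.1.2
  have hBu : ∀ p : {p : Fin N × Fin N // p.1 < p.2},
      (B *ᵥ u) p = u p.1.1 - u p.1.2 := by
    intro p
    have hne : p.1.1 ≠ p.1.2 := ne_of_lt p.2
    have : ∀ i : Fin N, B p i * u i =
        (if i = p.1.1 then u i else 0) + (if i = p.1.2 then -u i else 0) := by
      intro i
      rw [hB]
      by_cases h1 : i = p.1.1 <;> by_cases h2 : i = p.1.2 <;>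
        simp [h1, h2, hne, Ne.symm hne]
    simp only [Matrix.mulVec, dotProduct, this, Finset.sum_add_distrib,
      Finset.sum_ite_eq' (Finset.univ : Finset (Fin N))]
    simp [sub_eq_add_neg]
  have key : ∀ k, (Bᵀ *ᵥ (B *ᵥ u)) k = N * u k := by
    intro k
    have step1 : ∀ p : {p : Fin N × Fin N // p.1 < p.2},
        Bᵀ k p * (B *ᵥ u) p =
        (if k = p.1.1 then u p.1.1 - u p.1.2 else 0) +
        (if k = p.1.2 then u p.1.2 - u p.1.1 else 0) := by
      intro p
      have hne : p.1.1 ≠ p.1.2 := ne_of_lt p.2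
      rw [Matrix.transpose_apply, hB, hBu]
      by_cases h1 : k = p.1.1 <;> by_cases h2 : k = p.1.2
      · exact absurd (h1 ▸ h2) hne
      · simp [h1, h2, hne, Ne.symm hne]
      · simp [h1, h2, hne, Ne.symm hne]
      · simp [h1, h2]
    have : (Bᵀ *ᵥ (B *ᵥ u)) k =
        ∑ p : {p : Fin N × Fin N // p.1 < p.2},
          ((if k = p.1.1 then u p.1.1 - u p.1.2 else 0) +
           (if k = p.1.2 then u p.1.2 - u p.1.1 else 0)) := by
      simp only [Matrix.mulVec, dotProduct]
      exact Finset.sum_congr rfl (fun p _ => step1 p)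
    rw [this]
    -- move to a sum over the product type with an `if` guard
    have hsub : ∑ p : {p : Fin N × Fin N // p.1 < p.2},
          ((if k = p.1.1 then u p.1.1 - u p.1.2 else 0) +
           (if k = p.1.2 then u p.1.2 - u p.1.1 else 0))
        = ∑ q ∈ Finset.univ.filter (fun q : Fin N × Fin N => q.1 < q.2),
          ((if k = q.1 then u q.1 - u q.2 else 0) +
           (if k = q.2 then u q.2 - u q.1 else 0)) := by
      exact (Finset.sum_subtype
        (Finset.univ.filter (fun q : Fin N × Fin N => q.1 < q.2))
        (fun q => by simp)
        (fun q => (if k = q.1 then u q.1 - u q.2 else 0) +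
          (if k = q.2 then u q.2 - u q.1 else 0))).symm
    rw [hsub, Finset.sum_filter]
    rw [Fintype.sum_prod_type]
    have split : ∀ i j : Fin N,
        (if i < j then
          ((if k = i then u i - u j else 0) + (if k = j then u j - u i else 0)) else 0)
        = (if k = i then (if i < j then u i - u j else 0) else 0) +
          (if k = j then (if i < j then u j - u i else 0) else 0) := by
      intro i j
      by_cases h : i < j <;> simp [h]
    simp only [split, Finset.sum_add_distrib]
    have t1 : ∀ j : Fin N, (∑ i, ((if k = i then (if i < j then u i - u j else 0) else 0)))
        = (if k < j then u k - u j else 0) := by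
      intro j
      rw [Finset.sum_ite_eq Finset.univ k (fun i => if i < j then u i - u j else 0)]
      simp
    have t2 : ∀ i : Fin N, (∑ j, (if k = j then (if i < j then u j - u i else 0) else 0))
        = (if i < k then u k - u i else 0) := by
      intro i
      rw [Finset.sum_ite_eq Finset.univ k (fun j => if i < j then u j - u i else 0)]
      simp
    rw [Finset.sum_comm (f := fun i j =>
      if k = i then (if i < j then u i - u j else 0) else 0)]
    simp only [t1, t2]
    rw [← Finset.sum_add_distrib]
    have tri : ∀ j : Fin N,
        ((if k < j then u k - u j else 0) + (if j < k then u k - u j else 0))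
        = u k - u j := by
      intro j
      rcases lt_trichotomy k j with h | h | h
      · simp [h, asymm h]
      · simp [h]
      · simp [h, asymm h]
    simp only [tri]
    rw [Finset.sum_sub_distrib, hsum, Finset.sum_const, Finset.card_univ]
    simp [mul_comm]
  have hmain : (N : ℝ) • u = Bᵀ *ᵥ ρ := by
    funext k
    have := congrFun hnormal k
    rw [← Matrix.mulVec_mulVec] at this
    rw [Pi.smul_apply, smul_eq_mul, ← key k]
    exact this
  funext k
  have := congrFun hmain k
  rw [Pi.smul_apply, smul_eq_mul] at this ⊢
  field_simp
  linarith [this]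
end

section
/- Let N ≥ 1, let P = {(i,j) ∈ Fin N × Fin N : i < j}, and let B be the P × (Fin N) real matrix with B_{(i,j),k} = 1 if k = i, −1 if k = j, and 0 otherwise. Let ρ : P → ℝ and let u* = (1/N)·(Bᵀ ·ᵥ ρ). If u : Fin N → ℝ satisfies Σ_k u(k) = 0 and Σ_{p ∈ P} ((B ·ᵥ u)(p) − ρ(p))² = Σ_{p ∈ P} ((B ·ᵥ u*)(p) − ρ(p))² (i.e. u also attains the minimal least-squares value), then u = u*; the minimizer of ‖Bu − ρ‖² subject to Σ u(k) = 0 is unique. -/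
open Matrix Finset

section Aux

variable {N : ℕ} (B : Matrix {p : Fin N × Fin N // p.1 < p.2} (Fin N) ℝ)

def pmmuHB (B : Matrix {p : Fin N × Fin N // p.1 < p.2} (Fin N) ℝ) : Prop :=
  ∀ p k, B p k = if k = p.1.1 then 1 else if k = p.1.2 then -1 else 0

/-- Each row of `B` sums to zero. -/
lemma pmmu_rowsum (hB : ∀ p k, B p k = if k = p.1.1 then 1 else if k = p.1.2 then -1 else 0) (p : {p : Fin N × Fin N // p.1 < p.2}) :
    ∑ k, B p k = 0 := by
  have hij : p.1.1 ≠ p.1.2 := ne_of_lt p.2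
  have h : ∀ k : Fin N, B p k =
      (if k = p.1.1 then (1 : ℝ) else 0) + (if k = p.1.2 then -1 else 0) := by
    intro k
    rw [hB]
    split_ifs with h1 h2 <;> simp_all
  simp only [h]
  rw [Finset.sum_add_distrib, Finset.sum_ite_eq', Finset.sum_ite_eq']
  simp

/-- `(B *ᵥ x) p = x i - x j` for `p = (i,j)`. -/
lemma pmmu_mulVec (hB : ∀ p k, B p k = if k = p.1.1 then 1 else if k = p.1.2 then -1 else 0) (x : Fin N → ℝ) (p : {p : Fin N × Fin N // p.1 < p.2}) :
    (B *ᵥ x) p = x p.1.1 - x p.1.2 := by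
  have hij : p.1.1 ≠ p.1.2 := ne_of_lt p.2
  simp only [mulVec, dotProduct, hB]
  have h : ∀ k : Fin N,
      (if k = p.1.1 then (1 : ℝ) else if k = p.1.2 then -1 else 0) * x k =
      (if k = p.1.1 then x k else 0) + (if k = p.1.2 then -x k else 0) := by
    intro k
    split_ifs with h1 h2 <;> simp_all
  rw [Finset.sum_congr rfl (fun k _ => h k), Finset.sum_add_distrib,
    Finset.sum_ite_eq', Finset.sum_ite_eq']
  simp [sub_eq_add_neg]

/-- Key identity: `(Bᵀ B x)_k = N x_k - Σ x`. -/
lemma pmmu_key (hB : ∀ p k, B p k = if k = p.1.1 then 1 else if k = p.1.2 then -1 else 0) (x : Fin N → ℝ) (k : Fin N) :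
    ∑ p : {p : Fin N × Fin N // p.1 < p.2}, B p k * (x p.1.1 - x p.1.2)
      = (N : ℝ) * x k - ∑ j, x j := by
  simp only [hB]
  have hsub : ∑ p : {p : Fin N × Fin N // p.1 < p.2},
      (if k = p.1.1 then (1 : ℝ) else if k = p.1.2 then -1 else 0) * (x p.1.1 - x p.1.2)
      = ∑ q ∈ Finset.univ.filter (fun q : Fin N × Fin N => q.1 < q.2),
      (if k = q.1 then (1 : ℝ) else if k = q.2 then -1 else 0) * (x q.1 - x q.2) := by
    exact (Finset.sum_subtype (p := fun q : Fin N × Fin N => q.1 < q.2)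
      (Finset.univ.filter fun q : Fin N × Fin N => q.1 < q.2)
      (by simp) (fun q : Fin N × Fin N =>
        (if k = q.1 then (1 : ℝ) else if k = q.2 then -1 else 0) * (x q.1 - x q.2))).symm
  rw [hsub, Finset.sum_filter, Fintype.sum_prod_type]
  have h2 : ∀ i j : Fin N,
      (if i < j then (if k = i then (1 : ℝ) else if k = j then -1 else 0) * (x i - x j) else 0)
      = (if k = i then (if k < j then x k - x j else 0) else 0)
        + (if k = j then (if i < k then x k - x i else 0) else 0) := by
    intro i j
    rcases eq_or_ne k i with h1 | h1 <;> rcases eq_or_ne k j with hk2 | hk2 <;>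
      rcases lt_trichotomy i j with hij | hij | hij <;>
      simp_all
  simp only [h2]
  simp only [Finset.sum_add_distrib]
  have hA : ∑ i : Fin N, ∑ j : Fin N,
      (if k = i then (if k < j then x k - x j else 0) else 0)
      = ∑ j : Fin N, (if k < j then x k - x j else 0) := by
    have h4 : ∀ i : Fin N, (∑ j : Fin N, if k = i then (if k < j then x k - x j else 0) else 0)
        = if k = i then (∑ j : Fin N, if k < j then x k - x j else 0) else 0 := by
      intro i; split_ifs <;> simp
    rw [Finset.sum_congr rfl (fun i _ => h4 i), Finset.sum_ite_eq]
    simp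
  have hBs : ∑ i : Fin N, ∑ j : Fin N,
      (if k = j then (if i < k then x k - x i else 0) else 0)
      = ∑ i : Fin N, (if i < k then x k - x i else 0) := by
    refine Finset.sum_congr rfl fun i _ => ?_
    rw [Finset.sum_ite_eq]
    simp
  rw [hA, hBs, ← Finset.sum_add_distrib]
  have h3 : ∀ j : Fin N,
      (if k < j then x k - x j else 0) + (if j < k then x k - x j else 0) = x k - x j := by
    intro j
    rcases lt_trichotomy k j with h | h | h
    · rw [if_pos h, if_neg (asymm h)]; ring
    · subst h; simp
    · rw [if_neg (asymm h), if_pos h]; ring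
  rw [Finset.sum_congr rfl (fun j _ => h3 j), Finset.sum_sub_distrib,
    Finset.sum_const, Finset.card_univ, Fintype.card_fin, nsmul_eq_mul]

end Aux

/-- The minimizer of `‖Bu - ρ‖²` subject to `Σ u(k) = 0` is unique: any
zero-sum vector attaining the minimal least-squares value equals the
potential-method solution `u* = (1/N)·Bᵀρ`. -/
theorem potential_method_minimizer_unique
    (N : ℕ) (hN : 1 ≤ N)
    (B : Matrix {p : Fin N × Fin N // p.1 < p.2} (Fin N) ℝ)
    (hB : ∀ p k, B p k =
      if k = p.1.1 then 1 else if k = p.1.2 then -1 else 0)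
    (ρ : {p : Fin N × Fin N // p.1 < p.2} → ℝ)
    (uStar : Fin N → ℝ)
    (huStar : uStar = (1 / (N : ℝ)) • (Bᵀ *ᵥ ρ))
    (u : Fin N → ℝ)
    (hsum : ∑ k, u k = 0)
    (hmin : ∑ p, ((B *ᵥ u) p - ρ p) ^ 2 = ∑ p, ((B *ᵥ uStar) p - ρ p) ^ 2) :
    u = uStar := by
  have hNz : (N : ℝ) ≠ 0 := Nat.cast_ne_zero.mpr (by omega)
  have hBt : ∀ k, (Bᵀ *ᵥ ρ) k = ∑ p, B p k * ρ p := by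
    intro k; simp [mulVec, dotProduct, transpose_apply]
  -- Σ uStar = 0
  have hsStar : ∑ k, uStar k = 0 := by
    rw [huStar]
    simp only [Pi.smul_apply, smul_eq_mul]
    rw [← Finset.mul_sum]
    have h0 : ∑ k, (Bᵀ *ᵥ ρ) k = 0 := by
      simp only [hBt]
      rw [Finset.sum_comm]
      refine Finset.sum_eq_zero fun p _ => ?_
      rw [← Finset.sum_mul, pmmu_rowsum B hB p, zero_mul]
    rw [h0, mul_zero]
  -- (Bᵀρ)_k = N uStar_k
  have hStarEq : ∀ k, (Bᵀ *ᵥ ρ) k = (N : ℝ) * uStar k := by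
    intro k
    rw [huStar]
    simp only [Pi.smul_apply, smul_eq_mul]
    field_simp
  -- Bᵀ(B uStar - ρ) = 0
  have hcross : ∀ k, ∑ p, B p k * ((B *ᵥ uStar) p - ρ p) = 0 := by
    intro k
    have : ∀ p : {p : Fin N × Fin N // p.1 < p.2},
        B p k * ((B *ᵥ uStar) p - ρ p)
          = B p k * (uStar p.1.1 - uStar p.1.2) - B p k * ρ p := by
      intro p; rw [pmmu_mulVec B hB]; ring
    rw [Finset.sum_congr rfl (fun p _ => this p), Finset.sum_sub_distrib,
      pmmu_key B hB uStar k, hsStar, ← hBt, hStarEq]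
    ring
  -- the residual difference v
  set v : Fin N → ℝ := u - uStar with hv
  have hvsum : ∑ k, v k = 0 := by
    simp only [hv, Pi.sub_apply, Finset.sum_sub_distrib, hsum, hsStar, sub_zero]
  -- cross term vanishes
  have hC : ∑ p, (B *ᵥ v) p * ((B *ᵥ uStar) p - ρ p) = 0 := by
    have hexp : ∀ p : {p : Fin N × Fin N // p.1 < p.2},
        (B *ᵥ v) p * ((B *ᵥ uStar) p - ρ p)
          = ∑ k, v k * (B p k * ((B *ᵥ uStar) p - ρ p)) := by
      intro p
      simp only [mulVec, dotProduct]
      rw [Finset.sum_mul]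
      refine Finset.sum_congr rfl fun k _ => ?_
      ring
    rw [Finset.sum_congr rfl (fun p _ => hexp p), Finset.sum_comm]
    refine Finset.sum_eq_zero fun k _ => ?_
    rw [← Finset.mul_sum, hcross k, mul_zero]
  -- expansion of the objective
  have hBu : ∀ p, (B *ᵥ u) p = (B *ᵥ uStar) p + (B *ᵥ v) p := by
    intro p
    have : u = uStar + v := by funext k; simp [hv]
    rw [this, mulVec_add]; simp
  have hexp2 : ∑ p, ((B *ᵥ u) p - ρ p) ^ 2
      = ∑ p, ((B *ᵥ uStar) p - ρ p) ^ 2 + ∑ p, ((B *ᵥ v) p) ^ 2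
        + 2 * ∑ p, (B *ᵥ v) p * ((B *ᵥ uStar) p - ρ p) := by
    rw [← Finset.sum_add_distrib, Finset.mul_sum, ← Finset.sum_add_distrib]
    refine Finset.sum_congr rfl fun p _ => ?_
    rw [hBu p]
    ring
  have hSQ : ∑ p, ((B *ᵥ v) p) ^ 2 = 0 := by
    rw [hexp2, hC] at hmin
    linarith
  have hv0 : ∀ p, (B *ᵥ v) p = 0 := by
    intro p
    have := (Finset.sum_eq_zero_iff_of_nonneg (fun p _ => sq_nonneg ((B *ᵥ v) p))).mp hSQ
      p (Finset.mem_univ p)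
    exact pow_eq_zero_iff (by norm_num) |>.mp this
  -- conclude v = 0
  funext k
  have hk : (N : ℝ) * v k - ∑ j, v j = 0 := by
    rw [← pmmu_key B hB v k]
    refine Finset.sum_eq_zero fun p _ => ?_
    rw [← pmmu_mulVec B hB, hv0 p, mul_zero]
  rw [hvsum, sub_zero] at hk
  have : v k = 0 := by
    rcases mul_eq_zero.mp hk with h | h
    · exact absurd h hNz
    · exact h
  have := this
  simpa [hv, sub_eq_zero] using this
end
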